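/- Let H be a complex Hilbert space and let A ⊆ B(H) be a unital C*-subalgebra. Then F(A) ⊆ A'', i.e., every operator T ∈ B(H) fixed by all A-maps lies in the double commutant of A. -/

import Mathlib

variable {H : Type*} [NormedAddCommGroup H] [InnerProductSpace ℂ H] [CompleteSpace H]

/-- The bounded operator on the Hilbert space `H ⊕ ⋯ ⊕ H` (with its ℓ²-norm)
induced by an `n × n` matrix of bounded operators on `H`. -/
noncomputable def matOp {H : Type*} [NormedAddCommGroup H] [InnerProductSpace ℂ H]
    {n : ℕ} (A : Matrix (Fin n) (Fin n) (H →L[ℂ] H)) :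
    PiLp 2 (fun _ : Fin n => H) →L[ℂ] PiLp 2 (fun _ : Fin n => H) :=
  ((PiLp.continuousLinearEquiv 2 ℂ (fun _ : Fin n => H)).symm.toContinuousLinearMap.comp
      (ContinuousLinearMap.pi fun i => ∑ j, (A i j).comp (ContinuousLinearMap.proj j))).comp
    (PiLp.continuousLinearEquiv 2 ℂ (fun _ : Fin n => H)).toContinuousLinearMap

/-- A linear map on `B(H)` is completely contractive if all of its matrix amplifications
are contractive with respect to the C*-norms on `Mₙ(B(H)) ≅ B(H ⊕ ⋯ ⊕ H)`. -/
def FullCC {H : Type*} [NormedAddCommGroup H] [InnerProductSpace ℂ H]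
    (φ : (H →L[ℂ] H) →ₗ[ℂ] (H →L[ℂ] H)) : Prop :=
  ∀ (n : ℕ) (A : Matrix (Fin n) (Fin n) (H →L[ℂ] H)), ‖matOp (A.map φ)‖ ≤ ‖matOp A‖

/-- An `S`-map: a completely contractive linear map of `B(H)` fixing `S` pointwise. -/
def IsSMap {H : Type*} [NormedAddCommGroup H] [InnerProductSpace ℂ H]
    (S : Set (H →L[ℂ] H)) (φ : (H →L[ℂ] H) →ₗ[ℂ] (H →L[ℂ] H)) : Prop :=
  FullCC φ ∧ ∀ s ∈ S, φ s = s

/-- A minimal `S`-projection: an idempotent `S`-map whose seminorm `T ↦ ‖E T‖`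
is minimal among the seminorms of all `S`-maps. -/
def IsMinimalSProj {H : Type*} [NormedAddCommGroup H] [InnerProductSpace ℂ H]
    (S : Set (H →L[ℂ] H)) (E : (H →L[ℂ] H) →ₗ[ℂ] (H →L[ℂ] H)) : Prop :=
  IsSMap S E ∧ E ∘ₗ E = E ∧
    ∀ ψ : (H →L[ℂ] H) →ₗ[ℂ] (H →L[ℂ] H), IsSMap S ψ →
      (∀ T, ‖ψ T‖ ≤ ‖E T‖) → ∀ T, ‖ψ T‖ = ‖E T‖

/-!
Conjugation `X ↦ U X U*` by a unitary `U` of the commutant `A'` is an `A`-map, so every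
`T ∈ F(A)` commutes with all unitaries of `A'`. Since `A'` is a unital C*-algebra, it is
spanned by its unitaries, hence `T` commutes with all of `A'`.
-/

section MatOp

variable {H : Type*} [NormedAddCommGroup H] [InnerProductSpace ℂ H] {n : ℕ}

lemma matOp_apply (M : Matrix (Fin n) (Fin n) (H →L[ℂ] H)) (v : PiLp 2 (fun _ : Fin n => H))
    (i : Fin n) : matOp M v i = ∑ j, M i j (v j) := by
  simp [matOp]

lemma matOp_mul (M N : Matrix (Fin n) (Fin n) (H →L[ℂ] H)) :
    matOp (M * N) = (matOp M).comp (matOp N) := by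
  ext v i
  simp only [ContinuousLinearMap.comp_apply, matOp_apply, Matrix.mul_apply,
    FunLike.coe_sum, Finset.sum_apply, map_sum]
  exact Finset.sum_comm

lemma norm_matOp_diagonal_const_le (a : H →L[ℂ] H) :
    ‖matOp (Matrix.diagonal fun _ : Fin n => a)‖ ≤ ‖a‖ := by
  refine ContinuousLinearMap.opNorm_le_bound _ (norm_nonneg a) fun v => ?_
  have hcoord (i : Fin n) : matOp (Matrix.diagonal fun _ => a) v i = a (v i) := by
    rw [matOp_apply, Fintype.sum_eq_single i fun j hj => by simp [Matrix.diagonal_apply_ne' _ hj]]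
    simp
  rw [PiLp.norm_eq_of_L2, PiLp.norm_eq_of_L2, ← Real.sqrt_sq (norm_nonneg a),
    ← Real.sqrt_mul (sq_nonneg _), Finset.mul_sum]
  gcongr with i
  rw [hcoord, ← mul_pow]
  gcongr
  exact a.le_opNorm (v i)

lemma matOp_map_mulLeftRight (a b : H →L[ℂ] H) (M : Matrix (Fin n) (Fin n) (H →L[ℂ] H)) :
    matOp (M.map (LinearMap.mulLeftRight ℂ (a, b))) =
      (matOp (Matrix.diagonal fun _ => a)).comp
        ((matOp M).comp (matOp (Matrix.diagonal fun _ => b))) := by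
  rw [← matOp_mul, ← matOp_mul, ← mul_assoc]
  congr 1
  ext i j
  simp [Matrix.mul_diagonal, Matrix.diagonal_mul, LinearMap.mulLeftRight_apply]

lemma fullCC_mulLeftRight {a b : H →L[ℂ] H} (ha : ‖a‖ ≤ 1) (hb : ‖b‖ ≤ 1) :
    FullCC (LinearMap.mulLeftRight ℂ (a, b)) := by
  intro n M
  rw [matOp_map_mulLeftRight]
  calc _ ≤ ‖matOp (Matrix.diagonal fun _ : Fin n => a)‖ *
        (‖matOp M‖ * ‖matOp (Matrix.diagonal fun _ : Fin n => b)‖) :=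
        (ContinuousLinearMap.opNorm_comp_le _ _).trans
          (by gcongr; exact ContinuousLinearMap.opNorm_comp_le _ _)
    _ ≤ 1 * (‖matOp M‖ * 1) := by
        gcongr
        · exact (norm_matOp_diagonal_const_le a).trans ha
        · exact (norm_matOp_diagonal_const_le b).trans hb
    _ = ‖matOp M‖ := by ring

end MatOp

lemma norm_le_one_of_mem_unitary {E : Type*} [NormedRing E] [StarRing E] [CStarRing E]
    {U : E} (hU : U ∈ unitary E) : ‖U‖ ≤ 1 := by
  nontriviality E
  exact (CStarRing.norm_of_mem_unitary hU).le

lemma isSMap_mulLeftRight_unitary {S : Set (H →L[ℂ] H)} {U : H →L[ℂ] H}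
    (hU : U ∈ unitary (H →L[ℂ] H)) (hUS : U ∈ S.centralizer) :
    IsSMap S (LinearMap.mulLeftRight ℂ (U, star U)) := by
  refine ⟨fullCC_mulLeftRight (norm_le_one_of_mem_unitary hU)
    (norm_le_one_of_mem_unitary (Unitary.star_mem hU)), fun s hs => ?_⟩
  rw [LinearMap.mulLeftRight_apply, ← hUS s hs, mul_assoc, Unitary.mul_star_self_of_mem hU,
    mul_one]

lemma commute_of_forall_isSMap_apply_eq {S : Set (H →L[ℂ] H)} {T : H →L[ℂ] H}
    (hT : ∀ φ, IsSMap S φ → φ T = T) {U : H →L[ℂ] H} (hU : U ∈ unitary (H →L[ℂ] H))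
    (hUS : U ∈ S.centralizer) : Commute U T := by
  have hfix : U * T * star U = T := hT _ (isSMap_mulLeftRight_unitary hU hUS)
  calc U * T = U * T * star U * U := by
        rw [mul_assoc _ (star U), Unitary.star_mul_self_of_mem hU, mul_one]
    _ = T * U := by rw [hfix]

lemma commute_of_forall_commute_unitary {B : Type*} [CStarAlgebra B] (C : StarSubalgebra ℂ B)
    [IsClosed (C : Set B)] {x : B} (hx : ∀ u ∈ unitary B, u ∈ C → Commute u x) :
    ∀ c ∈ C, Commute c x := by
  suffices h : ∀ c ∈ Submodule.span ℂ (unitary C : Set C), Commute (c : B) x from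
    fun c hc => h ⟨c, hc⟩ (by simp [CStarAlgebra.span_unitary])
  intro c hc
  induction hc using Submodule.span_induction with
  | mem u hu =>
    refine hx u ⟨?_, ?_⟩ u.2
    · simpa using congrArg Subtype.val hu.1
    · simpa using congrArg Subtype.val hu.2
  | zero => exact Commute.zero_left x
  | add u v _ _ hu hv => exact hu.add_left hv
  | smul r u _ hu => exact hu.smul_left r

theorem stmt_15_general (A : StarSubalgebra ℂ (H →L[ℂ] H))
    (T : H →L[ℂ] H)
    (hT : ∀ φ : (H →L[ℂ] H) →ₗ[ℂ] (H →L[ℂ] H), IsSMap (A : Set (H →L[ℂ] H)) φ → φ T = T) :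
    T ∈ Set.centralizer (Set.centralizer (A : Set (H →L[ℂ] H))) := by
  let C := StarSubalgebra.centralizer ℂ (A : Set (H →L[ℂ] H))
  have hC : IsClosed (C : Set (H →L[ℂ] H)) := by
    rw [StarSubalgebra.coe_centralizer]
    exact Set.isClosed_centralizer _
  have hcomm (u : H →L[ℂ] H) (hu : u ∈ unitary (H →L[ℂ] H)) (huC : u ∈ C) : Commute u T :=
    commute_of_forall_isSMap_apply_eq hT hu
      fun a ha => ((StarSubalgebra.mem_centralizer_iff ℂ).1 huC a ha).1
  intro S hS
  refine (commute_of_forall_commute_unitary C hcomm S ?_).eq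
  exact (StarSubalgebra.mem_centralizer_iff ℂ).2 fun a ha => ⟨hS a ha, hS _ (star_mem ha)⟩

/-- For a unital C*-subalgebra `A ⊆ B(H)`, every operator fixed by all
`A`-maps lies in the double commutant: `F(A) ⊆ A''`. -/
theorem stmt_15 (A : StarSubalgebra ℂ (H →L[ℂ] H)) (hA : IsClosed (A : Set (H →L[ℂ] H)))
    (T : H →L[ℂ] H)
    (hT : ∀ φ : (H →L[ℂ] H) →ₗ[ℂ] (H →L[ℂ] H), IsSMap (A : Set (H →L[ℂ] H)) φ → φ T = T) :
    T ∈ Set.centralizer (Set.centralizer (A : Set (H →L[ℂ] H))) :=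
  stmt_15_general A T hT
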